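/- Consider the state-based algorithm with parameters (ω, φ) and decidable predicate R, started at s₀ = λn.none. If ω and φ are continuous, i.e., for every state s there exists L ∈ ℕ such that every state s' with s↾L = s'↾L satisfies ω(s') = ω(s) and φ(s') = φ(s), then the algorithm terminates after a finite number of steps: there is no infinite run s₀, s₁, s₂, … in which every state has a successor. -/

import Mathlib

/-!
If the algorithm never stopped, let `nᵢ ≤ ω(sᵢ)` be the position changed at step `i`. A
position `k` can only be freed by a change strictly below it, so once all later changes happen
at positions `≥ k`, position `k` is changed at most once more; by induction on `k`, `nᵢ → ∞`.
Hence every value `sᵢ(m)` is eventually constant and the run converges pointwise to a state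
`t`. Continuity of `ω` at `t` makes `ω(sᵢ) = ω(t)` for large `i`, contradicting `nᵢ → ∞`.
-/

-- A state is a function `ℕ → Option ℕ`; `s n = none` means `xₙ ∈ M[s]`, and
-- `s n = some p` means `xₙ ∉ M[s]` with recorded evidence `f[s](n) = p`.

/-- The finite set `M[s]↾n = M[s] ∩ {x_m | m < n}`. -/
def StateSeg {X : Type*} [DecidableEq X] (x : ℕ → X) (s : ℕ → Option ℕ) (n : ℕ) : Finset X :=
  ((Finset.range n).filter fun m => s m = none).image x

instance decExistsLE (N : ℕ) (p : ℕ → Prop) [DecidablePred p] :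
    Decidable (∃ m, m ≤ N ∧ p m) :=
  decidable_of_iff (∃ m, m < N + 1 ∧ p m) (by simp [Nat.lt_succ_iff])

/-- One step of the algorithm with parameters `(ω, φ)` and predicate `R`:
search for the least `n ≤ ω s` with `xₙ ∈ M[s]` and `¬R(M[s]↾n ∪ {xₙ}, φ s)`;
if none exists the state is final (the step returns `s` itself), otherwise
keep `s` below `n`, record `φ s` at `n`, and put everything above `n` back into `M`. -/
def StateStep {X : Type*} [DecidableEq X] (x : ℕ → X) (R : Finset X → ℕ → Prop)
    [∀ A p, Decidable (R A p)] (ω φ : (ℕ → Option ℕ) → ℕ)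
    (s : ℕ → Option ℕ) : ℕ → Option ℕ :=
  if h : ∃ m, m ≤ ω s ∧ s m = none ∧ ¬ R (StateSeg x s m ∪ {x m}) (φ s) then
    fun k => if k < Nat.find h then s k else if k = Nat.find h then some (φ s) else none
  else s

/-- The run of the algorithm started at the initial state `s₀ = λn.none`. -/
def StateRun {X : Type*} [DecidableEq X] (x : ℕ → X) (R : Finset X → ℕ → Prop)
    [∀ A p, Decidable (R A p)] (ω φ : (ℕ → Option ℕ) → ℕ) : ℕ → ℕ → Option ℕ
  | 0 => fun _ => none
  | i + 1 => StateStep x R ω φ (StateRun x R ω φ i)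

/-- A state is final (the algorithm terminates in it) if the search fails. -/
def StateFinal {X : Type*} [DecidableEq X] (x : ℕ → X) (R : Finset X → ℕ → Prop)
    (ω φ : (ℕ → Option ℕ) → ℕ) (s : ℕ → Option ℕ) : Prop :=
  ¬ ∃ m, m ≤ ω s ∧ s m = none ∧ ¬ R (StateSeg x s m ∪ {x m}) (φ s)

open Filter

section IndexSequence

variable {α : Type*} {s : ℕ → ℕ → Option α} {n : ℕ → ℕ}

theorem eq_of_forall_lt_index {I k : ℕ}
    (hkeep : ∀ i, ∀ m < n i, s (i + 1) m = s i m) (hk : ∀ i ≥ I, k < n i) :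
    ∀ i ≥ I, s i k = s I k := by
  intro i hi
  induction i, hi using Nat.le_induction with
  | base => rfl
  | succ i hi ih => rw [hkeep i k (hk i hi), ih]

theorem lt_index_of_ne_none {I k : ℕ} (hfree : ∀ i, s i (n i) = none)
    (hkeep : ∀ i, ∀ m < n i, s (i + 1) m = s i m) (hk : ∀ i ≥ I, k ≤ n i)
    {i₀ : ℕ} (hi₀ : I ≤ i₀) (hfilled : s i₀ k ≠ none) : ∀ i ≥ i₀, k < n i := by
  have hlt : ∀ i ≥ I, s i k ≠ none → k < n i := fun i hi hne =>
    (hk i hi).lt_of_ne fun h => hne (h ▸ hfree i)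
  suffices ∀ i ≥ i₀, s i k ≠ none from fun i hi => hlt i (hi₀.trans hi) (this i hi)
  intro i hi
  induction i, hi using Nat.le_induction with
  | base => exact hfilled
  | succ i hi ih => rwa [hkeep i k (hlt i (hi₀.trans hi) ih)]

theorem tendsto_index_atTop (hfree : ∀ i, s i (n i) = none)
    (hkeep : ∀ i, ∀ m < n i, s (i + 1) m = s i m) (hfill : ∀ i, s (i + 1) (n i) ≠ none) :
    Tendsto n atTop atTop := by
  refine tendsto_atTop_atTop.2 fun k => ?_
  induction k with
  | zero => exact ⟨0, fun i _ => Nat.zero_le _⟩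
  | succ k ih =>
    obtain ⟨I, hI⟩ := ih
    by_cases hhit : ∃ i₀ ≥ I, n i₀ = k
    · obtain ⟨i₀, hi₀, rfl⟩ := hhit
      exact ⟨i₀ + 1, lt_index_of_ne_none hfree hkeep hI hi₀.le.step (hfill i₀)⟩
    · push Not at hhit
      exact ⟨I, fun i hi => (hI i hi).lt_of_ne (hhit i hi).symm⟩

theorem exists_eventually_eq_of_tendsto_index
    (hkeep : ∀ i, ∀ m < n i, s (i + 1) m = s i m) (hn : Tendsto n atTop atTop) :
    ∃ t : ℕ → Option α, ∀ m, ∀ᶠ i in atTop, s i m = t m := by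
  have hstable : ∀ m, ∃ I, ∀ i ≥ I, s i m = s I m := fun m =>
    let ⟨I, hI⟩ := eventually_atTop.1 (hn.eventually_gt_atTop m)
    ⟨I, eq_of_forall_lt_index hkeep hI⟩
  choose I hI using hstable
  exact ⟨fun m => s (I m) m, fun m => eventually_atTop.2 ⟨I m, hI m⟩⟩

end IndexSequence

theorem eventually_eq_of_forall_eventually_eq {β γ : Type*} {f : (ℕ → β) → γ}
    {s : ℕ → ℕ → β} {t : ℕ → β} (hf : ∃ L, ∀ t', (∀ k < L, t k = t' k) → f t' = f t)
    (hs : ∀ m, ∀ᶠ i in atTop, s i m = t m) :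
    ∀ᶠ i in atTop, f (s i) = f t := by
  obtain ⟨L, hL⟩ := hf
  filter_upwards [(eventually_all_finite (Set.finite_Iio L)).2 fun m _ => hs m] with i hi
  exact hL (s i) fun k hk => (hi k hk).symm

theorem exists_index_of_not_stateFinal {X : Type*} [DecidableEq X] {x : ℕ → X}
    {R : Finset X → ℕ → Prop} [∀ A p, Decidable (R A p)] {ω φ : (ℕ → Option ℕ) → ℕ}
    {s : ℕ → Option ℕ} (h : ¬ StateFinal x R ω φ s) :
    ∃ n ≤ ω s, s n = none ∧ (∀ m < n, StateStep x R ω φ s m = s m) ∧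
      StateStep x R ω φ s n ≠ none := by
  have hex := not_not.1 h
  refine ⟨Nat.find hex, (Nat.find_spec hex).1, (Nat.find_spec hex).2.1, fun m hm => ?_, ?_⟩
  · rw [StateStep, dif_pos hex, if_pos hm]
  · rw [StateStep, dif_pos hex, if_neg (lt_irrefl _), if_pos rfl]
    exact Option.some_ne_none _

/-- If `(ω, φ)` are continuous, then the algorithm terminates after finitely many steps:
some state of the run is final. -/
theorem stmt11 {X : Type*} [DecidableEq X] (x : ℕ → X) (R : Finset X → ℕ → Prop)
    [∀ A p, Decidable (R A p)] (ω φ : (ℕ → Option ℕ) → ℕ)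
    (hcont : ∀ s : ℕ → Option ℕ, ∃ L : ℕ, ∀ s' : ℕ → Option ℕ,
      (∀ k < L, s k = s' k) → ω s' = ω s ∧ φ s' = φ s) :
    ∃ j : ℕ, StateFinal x R ω φ (StateRun x R ω φ j) := by
  by_contra! hrun
  choose n hn_le hfree hkeep hfill using fun i => exists_index_of_not_stateFinal (hrun i)
  have hn : Tendsto n atTop atTop :=
    tendsto_index_atTop (s := StateRun x R ω φ) hfree hkeep hfill
  obtain ⟨t, ht⟩ := exists_eventually_eq_of_tendsto_index (s := StateRun x R ω φ) hkeep hn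
  have hω : ∀ᶠ i in atTop, ω (StateRun x R ω φ i) = ω t :=
    eventually_eq_of_forall_eventually_eq
      (let ⟨L, hL⟩ := hcont t; ⟨L, fun t' h => (hL t' h).1⟩) ht
  obtain ⟨i, hi, hωi⟩ := ((hn.eventually_gt_atTop (ω t)).and hω).exists
  exact (hi.trans_le (hn_le i)).ne' hωi
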